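/- Let i ∈ [1,n], j ∈ [1,i), k ∈ [j,i), and b = min{low(k+1,i), j}. If maxlow(i) ≤ k, then γ^0_{[1,2]}(j,i:k) = min{ γ^1_{[1,2]}(b,k:k), γ^1_{[1,2]}(b,k:k,l) : l ∈ [b,j) }; otherwise (if maxlow(i) > k), γ^0_{[1,2]}(j,i:k) = ∞ (i.e., is not defined). -/

import Mathlib

/-- `G` is a graph with vertex set `{1,…,n}` (all edges lie inside `{1,…,n}`),
whose adjacency satisfies the interval-graph numbering property: whenever
`i < j < k` and `i` is adjacent to `k`, then `j` is adjacent to `k`. -/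
def GoodNumbering (G : SimpleGraph ℕ) (n : ℕ) : Prop :=
  (∀ u v : ℕ, G.Adj u v → u ∈ Finset.Icc 1 n ∧ v ∈ Finset.Icc 1 n) ∧
  (∀ i j k : ℕ, i < j → j < k → G.Adj i k → G.Adj j k)

/-- `low a = min N[a]`, the minimum of the closed neighborhood of `a`. -/
noncomputable def low (G : SimpleGraph ℕ) (a : ℕ) : ℕ :=
  sInf {b : ℕ | b = a ∨ G.Adj a b}

/-- `lowI a b = min {low k : k ∈ [a,b]}`. -/
noncomputable def lowI (G : SimpleGraph ℕ) (a b : ℕ) : ℕ :=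
  sInf (low G '' Set.Icc a b)

/-- `maxlow a = max {low k : low a ≤ k ≤ a}`. -/
noncomputable def maxlow (G : SimpleGraph ℕ) (a : ℕ) : ℕ :=
  sSup (low G '' Set.Icc (low G a) a)

/-- `D` is a `[1,2]`-dominating set of the induced subgraph `G[1,i]`:
`D ⊆ [1,i]` and every vertex of `[1,i]` outside `D` has at least one and at
most two neighbors in `D`. -/
def Dom12 (G : SimpleGraph ℕ) (i : ℕ) (D : Finset ℕ) : Prop :=
  D ⊆ Finset.Icc 1 i ∧
  ∀ v ∈ Finset.Icc 1 i, v ∉ D →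
    1 ≤ {u ∈ (D : Set ℕ) | G.Adj v u}.ncard ∧ {u ∈ (D : Set ℕ) | G.Adj v u}.ncard ≤ 2

/-- The minimum (in `ℕ∞`, with `sInf ∅ = ⊤`) of the cardinalities of the
`[1,2]`-dominating sets `D` of `G[1,i]` satisfying the extra property `P`. -/
noncomputable def gval (G : SimpleGraph ℕ) (i : ℕ) (P : Finset ℕ → Prop) : ℕ∞ :=
  sInf {k : ℕ∞ | ∃ D : Finset ℕ, Dom12 G i D ∧ P D ∧ (D.card : ℕ∞) = k}

/-- `γ_{[1,2]}(i)`. -/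
noncomputable def g12 (G : SimpleGraph ℕ) (i : ℕ) : ℕ∞ :=
  gval G i fun _ => True

/-- `γ⁰_{[1,2]}(j,i)`: no vertex of `[j,i]` is in `D`. -/
noncomputable def g0I (G : SimpleGraph ℕ) (j i : ℕ) : ℕ∞ :=
  gval G i fun D => ∀ x ∈ Finset.Icc j i, x ∉ D

/-- `γ⁰_{[1,2]}(j,i:k)`: `k ∈ D` and no other vertex of `[j,i]` is in `D`. -/
noncomputable def g0Ik (G : SimpleGraph ℕ) (j i k : ℕ) : ℕ∞ :=
  gval G i fun D => k ∈ D ∧ ∀ x ∈ Finset.Icc j i, x ≠ k → x ∉ D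

/-- `γ¹_{[1,2]}(i)`: `i ∈ D`. -/
noncomputable def g1 (G : SimpleGraph ℕ) (i : ℕ) : ℕ∞ :=
  gval G i fun D => i ∈ D

/-- `γ¹_{[1,2]}(j,i:i)`: `i ∈ D` and no vertex of `[j,i)` is in `D`. -/
noncomputable def g1I (G : SimpleGraph ℕ) (j i : ℕ) : ℕ∞ :=
  gval G i fun D => i ∈ D ∧ ∀ x ∈ Finset.Ico j i, x ∉ D

/-- `γ¹_{[1,2]}(k,i:i,j)`: `i, j ∈ D` and no other vertex of `[k,i)` is in `D`. -/
noncomputable def g1Ij (G : SimpleGraph ℕ) (k i j : ℕ) : ℕ∞ :=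
  gval G i fun D => i ∈ D ∧ j ∈ D ∧ ∀ x ∈ Finset.Ico k i, x ≠ j → x ∉ D

/-- `γ¹_{[1,2]}(l,i:i,j,k)`: `i, j, k ∈ D` and no other vertex of `[l,i)` is in `D`. -/
noncomputable def g1Ijk (G : SimpleGraph ℕ) (l i j k : ℕ) : ℕ∞ :=
  gval G i fun D => i ∈ D ∧ j ∈ D ∧ k ∈ D ∧ ∀ x ∈ Finset.Ico l i, x ≠ j → x ≠ k → x ∉ D

/-- `γ¹¹_{[1,2]}(l,i:i,j,k)`: `i, j ∈ D`, all of `[l,k] ⊆ D`, and no vertex of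
`(k,i)` other than `j` is in `D`. -/
noncomputable def g11Ijk (G : SimpleGraph ℕ) (l i j k : ℕ) : ℕ∞ :=
  gval G i fun D => i ∈ D ∧ j ∈ D ∧ (∀ x ∈ Finset.Icc l k, x ∈ D) ∧
    ∀ x ∈ Finset.Ioo k i, x ≠ j → x ∉ D

/-! Every vertex `v ∈ (k, i]` lies outside `D`, so it can only be dominated by vertices of `D` in
`[low v, k]`. If `maxlow i > k`, some `v ∈ [low i, i]` has `low v > k` and is not dominated at all.
Otherwise every `v ∈ (k, i]` is adjacent to `k` (the neighbours of a vertex below it form an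
interval) and its neighbours in `D` lie in `[b, k]`; hence a `[1,2]`-dominating set of `G[1,k]`
containing `k` is one of `G[1,i]` with the same window condition exactly when it has at most one
vertex in `[b, k)` and none in `[j, k)`. -/

section Low

variable {G : SimpleGraph ℕ}

lemma low_le_self (G : SimpleGraph ℕ) (a : ℕ) : low G a ≤ a :=
  Nat.sInf_le (Or.inl rfl)

lemma low_le_of_adj {a u : ℕ} (h : G.Adj a u) : low G a ≤ u :=
  Nat.sInf_le (Or.inr h)

lemma adj_low_of_low_lt {a : ℕ} (h : low G a < a) : G.Adj a (low G a) :=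
  (Nat.sInf_mem (s := {b | b = a ∨ G.Adj a b}) ⟨a, Or.inl rfl⟩).resolve_left h.ne

lemma adj_of_low_le_of_lt (hG : ∀ a m c : ℕ, a < m → m < c → G.Adj a c → G.Adj m c)
    {a m : ℕ} (h₁ : low G a ≤ m) (h₂ : m < a) : G.Adj a m := by
  rcases h₁.eq_or_lt with h | h
  · exact h ▸ adj_low_of_low_lt (h ▸ h₂)
  · exact (hG _ m a h h₂ (adj_low_of_low_lt (h.trans h₂)).symm).symm

lemma lowI_le_low {a b v : ℕ} (hv : v ∈ Set.Icc a b) : lowI G a b ≤ low G v :=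
  Nat.sInf_le ⟨v, hv, rfl⟩

lemma exists_low_eq_lowI {a b : ℕ} (hab : a ≤ b) : ∃ t ∈ Set.Icc a b, low G t = lowI G a b :=
  Nat.sInf_mem (s := low G '' Set.Icc a b) ⟨low G b, b, ⟨hab, le_rfl⟩, rfl⟩

lemma low_le_maxlow {i v : ℕ} (hv : v ∈ Set.Icc (low G i) i) : low G v ≤ maxlow G i :=
  le_csSup ((Set.finite_Icc _ _).image _).bddAbove ⟨v, hv, rfl⟩

lemma low_le_maxlow_of_maxlow_lt {i v : ℕ} (hv : maxlow G i < v) (hvi : v ≤ i) :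
    low G v ≤ maxlow G i :=
  low_le_maxlow ⟨(low_le_maxlow ⟨low_le_self G i, le_rfl⟩).trans hv.le, hvi⟩

lemma exists_low_eq_maxlow (G : SimpleGraph ℕ) (i : ℕ) :
    ∃ t ∈ Set.Icc (low G i) i, low G t = maxlow G i :=
  Set.Nonempty.csSup_mem (s := low G '' Set.Icc (low G i) i)
    ⟨low G i, i, ⟨low_le_self G i, le_rfl⟩, rfl⟩ ((Set.finite_Icc _ _).image _)

end Low

section Dom12

variable {G : SimpleGraph ℕ} {i : ℕ} {D : Finset ℕ}

lemma Dom12.exists_adj (hD : Dom12 G i D) {v : ℕ} (hv : v ∈ Finset.Icc 1 i) (hvD : v ∉ D) :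
    ∃ u ∈ D, G.Adj v u := by
  obtain ⟨u, huD, hvu⟩ := Set.nonempty_of_ncard_ne_zero (Nat.one_le_iff_ne_zero.mp (hD.2 v hv hvD).1)
  exact ⟨u, huD, hvu⟩

lemma Dom12.ncard_le_two {v : ℕ} (hD : Dom12 G i D) (hv : v ∈ Finset.Icc 1 i) (hvD : v ∉ D)
    {s : Set ℕ} (hsD : s ⊆ D) (hs : ∀ u ∈ s, G.Adj v u) : s.ncard ≤ 2 :=
  (Set.ncard_le_ncard (t := {u ∈ (D : Set ℕ) | G.Adj v u}) (fun u hu => ⟨hsD hu, hs u hu⟩)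
    (D.finite_toSet.subset fun _ hu => hu.1)).trans (hD.2 v hv hvD).2

lemma Dom12.restrict {k : ℕ} (hD : Dom12 G i D) (hki : k ≤ i) (hsub : D ⊆ Finset.Icc 1 k) :
    Dom12 G k D :=
  ⟨hsub, fun v hv hvD => hD.2 v (Finset.Icc_subset_Icc le_rfl hki hv) hvD⟩

lemma one_le_ncard_adj_le_two {v k l : ℕ} (hkD : k ∈ D) (hvk : G.Adj v k)
    (hsub : ∀ u ∈ D, G.Adj v u → u = k ∨ u = l) :
    1 ≤ {u ∈ (D : Set ℕ) | G.Adj v u}.ncard ∧ {u ∈ (D : Set ℕ) | G.Adj v u}.ncard ≤ 2 := by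
  have hpair : {u ∈ (D : Set ℕ) | G.Adj v u} ⊆ {k, l} := fun u hu => hsub u hu.1 hu.2
  have hfin := (Set.toFinite ({k, l} : Set ℕ)).subset hpair
  refine ⟨(Set.ncard_pos hfin).mpr ⟨k, hkD, hvk⟩, ?_⟩
  calc _ ≤ ({k, l} : Set ℕ).ncard := Set.ncard_le_ncard hpair
    _ ≤ ({l} : Set ℕ).ncard + 1 := Set.ncard_insert_le k {l}
    _ = 2 := by rw [Set.ncard_singleton]

end Dom12

section gval

variable {G : SimpleGraph ℕ}

lemma gval_le_gval {i i' : ℕ} {P P' : Finset ℕ → Prop}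
    (h : ∀ D, Dom12 G i' D → P' D → Dom12 G i D ∧ P D) : gval G i P ≤ gval G i' P' :=
  sInf_le_sInf fun _ ⟨D, hD, hP, hcard⟩ => ⟨D, (h D hD hP).1, (h D hD hP).2, hcard⟩

lemma gval_le_card {i : ℕ} {P : Finset ℕ → Prop} {D : Finset ℕ} (hD : Dom12 G i D) (hP : P D) :
    gval G i P ≤ D.card :=
  sInf_le ⟨D, hD, hP, rfl⟩

lemma le_gval {i : ℕ} {P : Finset ℕ → Prop} {x : ℕ∞}
    (h : ∀ D, Dom12 G i D → P D → x ≤ D.card) : x ≤ gval G i P :=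
  le_sInf fun _ ⟨D, hD, hP, hcard⟩ => hcard ▸ h D hD hP

end gval

section Window

variable {G : SimpleGraph ℕ} {i j k : ℕ} {D : Finset ℕ}

lemma g0Ik_eq_top_of_lt_maxlow (hjk : j ≤ k) (hml : k < maxlow G i) : g0Ik G j i k = ⊤ := by
  refine le_antisymm le_top (le_gval fun D hD ⟨_, hgap⟩ => ?_)
  obtain ⟨t, ⟨hit, hti⟩, ht⟩ := exists_low_eq_maxlow G i
  have hkt : k < t := hml.trans_le (ht ▸ low_le_self G t)
  obtain ⟨u, huD, htu⟩ := hD.exists_adj (Finset.mem_Icc.mpr ⟨by omega, hti⟩)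
    (hgap t (Finset.mem_Icc.mpr ⟨by omega, hti⟩) hkt.ne')
  have hku : k < u := hml.trans_le (ht ▸ low_le_of_adj htu)
  exact absurd huD (hgap u (Finset.mem_Icc.mpr ⟨by omega, (Finset.mem_Icc.mp (hD.1 huD)).2⟩)
    hku.ne')

lemma Dom12.extend_of_maxlow_le (hG : ∀ a m c : ℕ, a < m → m < c → G.Adj a c → G.Adj m c)
    {b l : ℕ} (hD : Dom12 G k D) (hkD : k ∈ D) (hki : k ≤ i) (hml : maxlow G i ≤ k)
    (hb : b ≤ lowI G (k + 1) i) (hDb : ∀ u ∈ D, u ∈ Finset.Ico b k → u = l) : Dom12 G i D := by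
  refine ⟨hD.1.trans (Finset.Icc_subset_Icc le_rfl hki), fun v hv hvD => ?_⟩
  rcases le_or_gt v k with hvk | hkv
  · exact hD.2 v (Finset.mem_Icc.mpr ⟨(Finset.mem_Icc.mp hv).1, hvk⟩) hvD
  have hvi := (Finset.mem_Icc.mp hv).2
  have hlow_k : low G v ≤ k := (low_le_maxlow_of_maxlow_lt (hml.trans_lt hkv) hvi).trans hml
  have hb_low : b ≤ low G v := hb.trans (lowI_le_low ⟨hkv, hvi⟩)
  refine one_le_ncard_adj_le_two (l := l) hkD (adj_of_low_le_of_lt hG hlow_k hkv) fun u huD hvu => ?_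
  have huk := (Finset.mem_Icc.mp (hD.1 huD)).2
  rcases huk.eq_or_lt with h | h
  · exact Or.inl h
  · exact Or.inr (hDb u huD (Finset.mem_Ico.mpr ⟨hb_low.trans (low_le_of_adj hvu), h⟩))

/-- The vertex `t ∈ (k, i]` with `low t = lowI G (k + 1) i` is outside `D` and adjacent to all of
`[low t, k]`, so it has at most one neighbour in `D` besides `k`. -/
lemma subsingleton_inter_Ico_lowI (hG : ∀ a m c : ℕ, a < m → m < c → G.Adj a c → G.Adj m c)
    (hki : k < i) (hD : Dom12 G i D) (hkD : k ∈ D) (hgap : ∀ x ∈ Finset.Ioc k i, x ∉ D) :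
    {u | u ∈ D ∧ u ∈ Set.Ico (lowI G (k + 1) i) k}.Subsingleton := by
  rintro l₁ ⟨hl₁D, hbl₁, hl₁k⟩ l₂ ⟨hl₂D, hbl₂, hl₂k⟩
  by_contra hne
  obtain ⟨t, ⟨hkt, hti⟩, ht⟩ := exists_low_eq_lowI (G := G) (Nat.succ_le_of_lt hki)
  have hadj : ∀ u, lowI G (k + 1) i ≤ u → u ≤ k → G.Adj t u := fun u hu huk =>
    adj_of_low_le_of_lt hG (ht ▸ hu) (by omega)
  have h3 : ({l₁, l₂, k} : Set ℕ).ncard = 3 :=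
    Set.ncard_eq_three.mpr ⟨l₁, l₂, k, hne, hl₁k.ne, hl₂k.ne, rfl⟩
  have h2 := hD.ncard_le_two (v := t) (s := {l₁, l₂, k}) (Finset.mem_Icc.mpr ⟨by omega, hti⟩)
    (hgap t (Finset.mem_Ioc.mpr ⟨by omega, hti⟩))
    (by rintro u (rfl | rfl | rfl) <;> assumption)
    (by rintro u (rfl | rfl | rfl) <;> apply hadj <;> omega)
  omega

lemma g0Ik_le_gval (hG : ∀ a m c : ℕ, a < m → m < c → G.Adj a c → G.Adj m c)
    {b l : ℕ} {P : Finset ℕ → Prop} (hki : k ≤ i) (hml : maxlow G i ≤ k)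
    (hb : b ≤ lowI G (k + 1) i) (hbj : b ≤ j)
    (hP : ∀ D, P D → k ∈ D ∧ ∀ u ∈ D, u ∈ Finset.Ico b k → u = l ∧ u < j) :
    g0Ik G j i k ≤ gval G k P := by
  refine gval_le_gval fun D hD hPD => ?_
  obtain ⟨hkD, hDb⟩ := hP D hPD
  refine ⟨hD.extend_of_maxlow_le hG hkD hki hml hb fun u hu hub => (hDb u hu hub).1, hkD,
    fun x hx hxk hxD => ?_⟩
  have hxk' := (Finset.mem_Icc.mp (hD.1 hxD)).2
  have := (Finset.mem_Icc.mp hx).1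
  have := (hDb x hxD (Finset.mem_Ico.mpr ⟨by omega, by omega⟩)).2
  omega

lemma g1I_le_card_or_g1Ij_le_card (hG : ∀ a m c : ℕ, a < m → m < c → G.Adj a c → G.Adj m c)
    {b : ℕ} (hjk : j ≤ k) (hki : k < i) (hb : b = min (lowI G (k + 1) i) j)
    (hD : Dom12 G i D) (hkD : k ∈ D) (hgap : ∀ x ∈ Finset.Icc j i, x ≠ k → x ∉ D) :
    g1I G b k ≤ D.card ∨ ∃ l ∈ Finset.Ico b j, g1Ij G b k l ≤ D.card := by
  have hDk : Dom12 G k D := hD.restrict hki.le fun x hx => by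
    have := Finset.mem_Icc.mp (hD.1 hx)
    by_contra hxk
    exact hgap x (Finset.mem_Icc.mpr ⟨by grind, this.2⟩) (by grind) hx
  have hDjk : ∀ x ∈ D, x ∈ Finset.Ico b k → x < j := fun x hx hxb => by
    by_contra hxj
    exact hgap x (Finset.mem_Icc.mpr (by grind)) (by grind) hx
  by_cases hl : ∃ l ∈ D, l ∈ Finset.Ico b j
  · obtain ⟨l, hlD, hl⟩ := hl
    have hsub := subsingleton_inter_Ico_lowI hG hki hD hkD fun x hx => hgap x (by grind) (by grind)
    refine Or.inr ⟨l, hl, gval_le_card hDk ⟨hkD, hlD, fun x hx hxl hxD => hxl ?_⟩⟩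
    have := hDjk x hxD hx
    exact hsub ⟨hxD, by grind⟩ ⟨hlD, by grind⟩
  · exact Or.inl (gval_le_card hDk ⟨hkD, fun x hx hxD => hl ⟨x, hxD, by grind⟩⟩)

end Window

theorem g0Ik_recurrence_general (G : SimpleGraph ℕ) (n : ℕ)
    (hG : GoodNumbering G n) (i j k b : ℕ)
    (hk : k ∈ Finset.Ico j i)
    (hb : b = min (lowI G (k + 1) i) j) :
    (maxlow G i ≤ k →
      g0Ik G j i k =
        sInf {v : ℕ∞ | v = g1I G b k ∨ ∃ l ∈ Finset.Ico b j, v = g1Ij G b k l}) ∧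
    (k < maxlow G i → g0Ik G j i k = ⊤) := by
  obtain ⟨hjk, hki⟩ := Finset.mem_Ico.mp hk
  refine ⟨fun hml => le_antisymm ?_ ?_, g0Ik_eq_top_of_lt_maxlow hjk⟩
  · refine le_sInf ?_
    rintro v (rfl | ⟨l, hl, rfl⟩)
    · exact g0Ik_le_gval (l := b) hG.2 hki.le hml (hb ▸ min_le_left _ _) (hb ▸ min_le_right _ _)
        fun D ⟨hkD, hD⟩ => ⟨hkD, fun u hu hub => absurd hu (hD u hub)⟩
    · refine g0Ik_le_gval (l := l) hG.2 hki.le hml (hb ▸ min_le_left _ _) (hb ▸ min_le_right _ _)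
        fun D ⟨hkD, hlD, hD⟩ => ⟨hkD, fun u hu hub => ?_⟩
      obtain rfl : u = l := by_contra fun hul => hD u hub hul hu
      exact ⟨rfl, (Finset.mem_Ico.mp hl).2⟩
  · refine le_gval fun D hD ⟨hkD, hgap⟩ => ?_
    rcases g1I_le_card_or_g1Ij_le_card hG.2 hjk hki hb hD hkD hgap with h | ⟨l, hl, h⟩
    · exact sInf_le_of_le (Or.inl rfl) h
    · exact sInf_le_of_le (Or.inr ⟨l, hl, rfl⟩) h

/-- Recurrence for `γ⁰_{[1,2]}(j,i:k)`, with `b = min (low(k+1,i)) j`. -/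
theorem g0Ik_recurrence (G : SimpleGraph ℕ) (n : ℕ) (hn : 1 ≤ n)
    (hG : GoodNumbering G n) (i j k b : ℕ)
    (hi : i ∈ Finset.Icc 1 n) (hj : j ∈ Finset.Ico 1 i) (hk : k ∈ Finset.Ico j i)
    (hb : b = min (lowI G (k + 1) i) j) :
    (maxlow G i ≤ k →
      g0Ik G j i k =
        sInf {v : ℕ∞ | v = g1I G b k ∨ ∃ l ∈ Finset.Ico b j, v = g1Ij G b k l}) ∧
    (k < maxlow G i → g0Ik G j i k = ⊤) :=
  g0Ik_recurrence_general G n hG i j k b hk hb
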